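/- With $q, s, \pi$ as before ($GF(s)$ a proper subfield of $GF(q)$ with $s^t = q$, $t > 1$), let $S = \{u(a,b) : a,b \in GF(q)\}$ with multiplication $u(a,b)u(c,d) = u(a+c, c\,\pi(a)+b+d)$, and let $S_1 = \{u(a,b) : a,b \in GF(s)\}$. Then the normalizer of $S_1$ in $S$ equals $\{u(c,d) : c \in GF(s),\ d \in GF(q)\}$, a subgroup of order $s \cdot q$; in particular $N_S(S_1)$ is a proper subgroup of $S$. -/

import Mathlib

/-!
Conjugation by `u(c,d)` sends `u(a,b)` to `u(a, b + c π(a) + a π(c))`, so `u(c,d)` normalizes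
`S₁` when `c ∈ GF(s)`; conversely `a = 1` forces `c + π(c) ∈ GF(s)`. As `π ∘ π` is squaring,
`c² + c = (c + π c) + π (c + π c) ∈ GF(s)`, and then `c ∈ GF(s)` by Artin–Schreier:
`y = c ^ s + c` satisfies `y² = y`, and `y = 1` would give `c = c ^ (s ^ t) = c + t = c + 1`
because `t` is odd.
-/
open Polynomial

theorem Subfield.mem_iff_pow_card_eq_self {K : Type*} [Field K] (F : Subfield K) [Finite F]
    {x : K} : x ∈ F ↔ x ^ Nat.card F = x := by
  have := Fintype.ofFinite F
  have hsplits : Splits (X ^ Fintype.card F - X : F[X]) := by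
    rw [splits_iff_card_roots, FiniteField.roots_X_pow_card_sub_X, ← Finset.card_def,
      Finset.card_univ, FiniteField.X_pow_card_sub_X_natDegree_eq _ Fintype.one_lt_card]
  have hroots := hsplits.roots_map F.subtype
  rw [FiniteField.roots_X_pow_card_sub_X] at hroots
  have hmem := congrArg (x ∈ ·) hroots
  simp only [Polynomial.map_sub, Polynomial.map_pow, map_X, mem_roots', ne_eq,
    FiniteField.X_pow_card_sub_X_ne_zero K Fintype.one_lt_card, not_false_eq_true, IsRoot.def,
    eval_sub, eval_pow, eval_X, sub_eq_zero, true_and, coe_subtype, Multiset.mem_map,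
    Finset.mem_val, Finset.mem_univ, Subtype.exists, exists_prop, exists_eq_right, eq_iff_iff]
    at hmem
  rw [← hmem, Fintype.card_eq_nat_card]

theorem Subfield.mem_of_sq_add_self_mem {K : Type*} [Field K] [CharP K 2] (F : Subfield K)
    {k t : ℕ} (hF : ∀ x, x ∈ F ↔ x ^ 2 ^ k = x) (hK : ∀ x : K, x ^ (2 ^ k) ^ t = x)
    (ht : Odd t) {c : K} (hc : c ^ 2 + c ∈ F) : c ∈ F := by
  have h2 : (2 : K) = 0 := CharTwo.two_eq_zero
  have hfrob : ∀ x y : K, (x + y) ^ 2 ^ k = x ^ 2 ^ k + y ^ 2 ^ k :=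
    fun x y => add_pow_char_pow x y 2 k
  have hcast : ∀ j : ℕ, (j : K) ^ 2 ^ k = j := fun j => by
    rw [← iterateFrobenius_def, map_natCast]
  have hroot : (c ^ 2 ^ k + c) * (c ^ 2 ^ k + c + 1) = 0 := by
    have h := (hF _).1 hc
    rw [hfrob, ← pow_mul, mul_comm, pow_mul] at h
    linear_combination h + (c * c ^ 2 ^ k + c ^ 2 + c) * h2
  rcases mul_eq_zero.1 hroot with h | h
  · exact (hF c).2 (CharTwo.add_eq_zero.1 h)
  · have hstep : c ^ 2 ^ k = c + 1 := by linear_combination h - (c + 1) * h2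
    have hiter : ∀ j : ℕ, c ^ (2 ^ k) ^ j = c + j := by
      intro j
      induction j with
      | zero => simp
      | succ j ih => rw [pow_succ, pow_mul, ih, hfrob, hstep, hcast, Nat.cast_succ]; ring
    have hodd : (t : K) = 1 := by rw [CharTwo.natCast_eq_mod, Nat.odd_iff.1 ht, Nat.cast_one]
    have := hiter t
    rw [hK, hodd] at this
    exact absurd (left_eq_add.1 this) one_ne_zero

theorem Subfield.mem_of_add_map_self_mem {K : Type*} [Field K] [CharP K 2] (F : Subfield K)
    (π : K →+* K) (hπ : ∀ x, π (π x) = x ^ 2) (hπF : ∀ x ∈ F, π x ∈ F)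
    (hF : ∀ c, c ^ 2 + c ∈ F → c ∈ F) {c : K} (hc : c + π c ∈ F) : c ∈ F := by
  refine hF c ?_
  have h2 : (2 : K) = 0 := CharTwo.two_eq_zero
  have h : c + π c + π (c + π c) = c ^ 2 + c := by
    rw [map_add, hπ]
    linear_combination π c * h2
  exact h ▸ F.add_mem hc (hπF _ hc)

namespace Suzuki

variable {K : Type*} [Field K]

def mul (π : K → K) (u v : K × K) : K × K := (u.1 + v.1, v.1 * π u.1 + u.2 + v.2)

def inv (π : K → K) (u : K × K) : K × K := (u.1, u.2 + u.1 * π u.1)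

variable [CharP K 2] (π : K →+* K)

theorem conj_eq (a b c d : K) :
    mul π (mul π (inv π (c, d)) (a, b)) (c, d) = (a, c * π a + a * π c + b) := by
  have h2 : (2 : K) = 0 := CharTwo.two_eq_zero
  simp only [mul, inv, map_add, Prod.mk.injEq]
  constructor
  · linear_combination c * h2
  · linear_combination (c * π c + d) * h2

theorem normalizer_eq (F : Subfield K) (hπF : ∀ x ∈ F, π x ∈ F)
    (hF : ∀ c, c + π c ∈ F → c ∈ F) :
    {x : K × K | ∀ u ∈ {u : K × K | u.1 ∈ F ∧ u.2 ∈ F},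
      mul π (mul π (inv π x) u) x ∈ {u : K × K | u.1 ∈ F ∧ u.2 ∈ F}} = {x | x.1 ∈ F} := by
  ext ⟨c, d⟩
  simp only [Set.mem_ofPred_eq, Prod.forall, conj_eq]
  refine ⟨fun h => hF c ?_, fun hc a b ⟨ha, hb⟩ => ⟨ha, ?_⟩⟩
  · simpa using (h 1 0 ⟨F.one_mem, F.zero_mem⟩).2
  · exact F.add_mem (F.add_mem (F.mul_mem hc (hπF a ha)) (F.mul_mem ha (hπF c hc))) hb

end Suzuki

theorem stmt5_general (m p t : ℕ) (ht1 : 1 < t) (ht : (2*p+1) * t = 2*m+1)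
    (F : Subfield (GaloisField 2 (2*m+1))) (hF : Nat.card F = 2 ^ (2*p+1)) :
    let K := GaloisField 2 (2*m+1)
    let π : K → K := fun x => x ^ (2 ^ (m+1))
    let mul : K × K → K × K → K × K := fun u v => (u.1 + v.1, v.1 * π u.1 + u.2 + v.2)
    let inv : K × K → K × K := fun u => (u.1, u.2 + u.1 * π u.1)
    let S1 : Set (K × K) := {u | u.1 ∈ F ∧ u.2 ∈ F}
    let NS1 : Set (K × K) := {x | ∀ u ∈ S1, mul (mul (inv x) u) x ∈ S1}
    NS1 = {x : K × K | x.1 ∈ F} ∧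
    Nat.card {x : K × K | x.1 ∈ F} = 2 ^ (2*p+1) * 2 ^ (2*m+1) ∧
    NS1 ≠ Set.univ := by
  intro K π mul inv S1 NS1
  have hcardK : Nat.card K = 2 ^ (2*m+1) := GaloisField.card 2 (2*m+1) (by omega)
  have hK : ∀ x : K, x ^ 2 ^ (2*m+1) = x := fun x => by
    have := Fintype.ofFinite K
    rw [← hcardK, Nat.card_eq_fintype_card, FiniteField.pow_card]
  have hFmem : ∀ x, x ∈ F ↔ x ^ 2 ^ (2*p+1) = x := fun x => hF ▸ F.mem_iff_pow_card_eq_self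
  set φ := iterateFrobenius K 2 (m+1)
  have hφφ : ∀ x, φ (φ x) = x ^ 2 := fun x => by
    rw [iterateFrobenius_def, iterateFrobenius_def, ← pow_mul, ← pow_add,
      show m + 1 + (m + 1) = (2*m+1) + 1 by ring, pow_succ, pow_mul, hK]
  have hφF : ∀ x ∈ F, φ x ∈ F := fun x hx => F.pow_mem hx _
  have hodd : Odd t := (Nat.odd_mul.1 (ht ▸ odd_two_mul_add_one m)).2
  have hAS : ∀ c, c ^ 2 + c ∈ F → c ∈ F := fun _ =>
    F.mem_of_sq_add_self_mem hFmem (by rw [← pow_mul, ht]; exact hK) hodd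
  have hNS1 : NS1 = {x | x.1 ∈ F} :=
    Suzuki.normalizer_eq φ F hφF fun _ => F.mem_of_add_map_self_mem φ hφφ hφF hAS
  have hcard : Nat.card {x : K × K | x.1 ∈ F} = 2 ^ (2*p+1) * 2 ^ (2*m+1) :=
    calc Nat.card {x : K × K | x.1 ∈ F}
      _ = Nat.card (F × K) := Nat.card_congr Equiv.prodSubtypeFstEquivSubtypeProd
      _ = 2 ^ (2*p+1) * 2 ^ (2*m+1) := by rw [Nat.card_prod, hF, hcardK]
  refine ⟨hNS1, hcard, fun huniv => ?_⟩
  have hlt : 2 ^ (2*p+1) < 2 ^ (2*m+1) := Nat.pow_lt_pow_right (by norm_num) (by nlinarith)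
  rw [hNS1] at huniv
  rw [huniv, Nat.card_univ, Nat.card_prod, hcardK] at hcard
  exact absurd hcard (Nat.mul_lt_mul_of_pos_right hlt (by positivity)).ne'

/-- With `S = {u(a,b) : a,b ∈ GF(q)}` (multiplication
    `u(a,b)u(c,d) = u(a+c, c·π(a)+b+d)`) and `S₁ = {u(a,b) : a,b ∈ GF(s)}` for a
    proper subfield `GF(s)` with `s^t = q`, `t > 1`: the normalizer of `S₁` in `S`
    is exactly `{u(c,d) : c ∈ GF(s), d ∈ GF(q)}`, a subgroup of order `s·q`,
    which is proper in `S`. -/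
theorem stmt5 (m p t : ℕ) (hm : 1 ≤ m) (ht1 : 1 < t) (ht : (2*p+1) * t = 2*m+1)
    (F : Subfield (GaloisField 2 (2*m+1))) (hF : Nat.card F = 2 ^ (2*p+1)) :
    let K := GaloisField 2 (2*m+1)
    let π : K → K := fun x => x ^ (2 ^ (m+1))
    let mul : K × K → K × K → K × K := fun u v => (u.1 + v.1, v.1 * π u.1 + u.2 + v.2)
    let inv : K × K → K × K := fun u => (u.1, u.2 + u.1 * π u.1)
    let S1 : Set (K × K) := {u | u.1 ∈ F ∧ u.2 ∈ F}
    let NS1 : Set (K × K) := {x | ∀ u ∈ S1, mul (mul (inv x) u) x ∈ S1}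
    NS1 = {x : K × K | x.1 ∈ F} ∧
    Nat.card {x : K × K | x.1 ∈ F} = 2 ^ (2*p+1) * 2 ^ (2*m+1) ∧
    NS1 ≠ Set.univ :=
  stmt5_general m p t ht1 ht F hF
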